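/- arXiv:2509.15759 — 6 statements merged into one kernel-verified Lean document; each statement's English description precedes it below -/
import Mathlib

section
/- Let 𝒴 and 𝒜 be finite sets, let q_{ia} > 0 for i ∈ 𝒴, a ∈ 𝒜 with Σ_{i,a} q_{ia} = 1, and for each (i,a) let p_{ia} be the density of the multivariate normal distribution N(μ_{ia}, Σ_{ia}) on ℝ^d with μ_{ia} ∈ ℝ^d and Σ_{ia} positive definite. Suppose that for all i, j ∈ 𝒴 and all a, a' ∈ 𝒜: (1) Σ_{ia}^{-1/2}(μ_{ia} − μ_{ja}) = Σ_{ia'}^{-1/2}(μ_{ia'} − μ_{ja'}); (2) Σ_{ia}^{1/2} Σ_{ja}^{-1} Σ_{ia}^{1/2} = Σ_{ia'}^{1/2} Σ_{ja'}^{-1} Σ_{ia'}^{1/2}; and (3) q_{ia}/q_{ja} = q_{ia'}/q_{ja'}. Then for every y ∈ 𝒴 and every a, a' ∈ 𝒜, the probability under X ~ N(μ_{ya}, Σ_{ya}) of the event {x ∈ ℝ^d : log(p_{ya}(x)/p_{ia}(x)) ≥ log(q_{ia}/q_{ya}) for all i ∈ 𝒴} equals the probability under X ~ N(μ_{ya'},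 Σ_{ya'}) of the event {x ∈ ℝ^d : log(p_{ya'}(x)/p_{ia'}(x)) ≥ log(q_{ia'}/q_{ya'}) for all i ∈ 𝒴}. In other words, the group-aware Bayes optimal classifier has equal class-y true positive rates across all groups (equal opportunity). -/
/-!
Whitening. The affine substitution `z = Σ_{ya}^{-1/2} (x - μ_{ya})` transports `N(μ_{ia}, Σ_{ia})`
to `N(Σ_{ya}^{-1/2}(μ_{ia} - μ_{ya}), (Σ_{ya}^{1/2} Σ_{ia}^{-1} Σ_{ya}^{1/2})⁻¹)`
and rescales every density by the same Jacobian factor, so it leaves the likelihood ratios,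
hence the Bayes region, unchanged. The true positive rate of class `y` in group `a` is therefore
the same quantity computed for the whitened Gaussians, whose parameters do not depend on `a` by
conditions (1) and (2), while the thresholds do not depend on `a` by (3).
-/

open MeasureTheory Matrix

noncomputable def mvnPdf {d : ℕ} (μ : Fin d → ℝ) (S : Matrix (Fin d) (Fin d) ℝ)
    (x : Fin d → ℝ) : ℝ :=
  (2 * Real.pi) ^ (-(d : ℝ) / 2) * S.det ^ (-(1 : ℝ) / 2) *
    Real.exp (-(1 / 2) * ((x - μ) ⬝ᵥ (S⁻¹ *ᵥ (x - μ))))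

open scoped ComplexOrder in
noncomputable def Matrix.PosSemidef.sqrt {n : Type*} [Fintype n] [DecidableEq n] {𝕜 : Type*}
    [RCLike 𝕜] {A : Matrix n n 𝕜} (hA : A.PosSemidef) : Matrix n n 𝕜 :=
  hA.1.eigenvectorUnitary.1 * diagonal ((↑) ∘ (√·) ∘ hA.1.eigenvalues) *
    (star hA.1.eigenvectorUnitary : Matrix n n 𝕜)

namespace Matrix

section PosSemidef

open scoped ComplexOrder

variable {n : Type*} [Fintype n] [DecidableEq n] {𝕜 : Type*} [RCLike 𝕜] {A : Matrix n n 𝕜}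

theorem PosSemidef.posSemidef_sqrt (hA : A.PosSemidef) : hA.sqrt.PosSemidef := by
  have hD : (diagonal ((↑) ∘ (√·) ∘ hA.1.eigenvalues) : Matrix n n 𝕜).PosSemidef :=
    PosSemidef.diagonal fun i => by simp [Real.sqrt_nonneg]
  unfold PosSemidef.sqrt
  simpa [star_eq_conjTranspose] using
    hD.mul_mul_conjTranspose_same (hA.1.eigenvectorUnitary : Matrix n n 𝕜)

theorem PosSemidef.sqrt_mul_self (hA : A.PosSemidef) : hA.sqrt * hA.sqrt = A := by
  set U : Matrix n n 𝕜 := hA.1.eigenvectorUnitary.1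
  set D : Matrix n n 𝕜 := diagonal ((↑) ∘ (√·) ∘ hA.1.eigenvalues)
  have hU : star U * U = 1 := Unitary.coe_star_mul_self _
  have hDD : D * D = diagonal (RCLike.ofReal ∘ hA.1.eigenvalues) := by
    rw [diagonal_mul_diagonal]
    congr 1
    funext i
    simp only [Function.comp_apply]
    rw [← RCLike.ofReal_mul, Real.mul_self_sqrt (hA.eigenvalues_nonneg i)]
  calc hA.sqrt * hA.sqrt = U * (D * (star U * U) * D) * star U := by
        simp only [PosSemidef.sqrt, U, D, mul_assoc]
    _ = A := by
        rw [hU, mul_one, hDD]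
        conv_rhs => rw [hA.1.spectral_theorem, Unitary.conjStarAlgAut_apply]

end PosSemidef

variable {n : Type*} [Fintype n] {R : Type*} [CommRing R]

theorem dotProduct_mulVec_mulVec_self (B M : Matrix n n R) (u : n → R) :
    (B *ᵥ u) ⬝ᵥ (M *ᵥ (B *ᵥ u)) = u ⬝ᵥ ((Bᵀ * M * B) *ᵥ u) := by
  rw [← mulVec_mulVec, ← mulVec_mulVec, dotProduct_mulVec u, vecMul_transpose]

variable [DecidableEq n]

theorem transpose_mul_inv_mul_mul_transpose_mul {B : Matrix n n R} (hB : IsUnit B.det)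
    (S : Matrix n n R) : Bᵀ * (B * S * Bᵀ)⁻¹ * B = S⁻¹ := by
  have hBT : IsUnit Bᵀ.det := by rwa [det_transpose]
  rw [Matrix.mul_inv_rev, Matrix.mul_inv_rev, ← mul_assoc, ← mul_assoc, mul_nonsing_inv _ hBT,
    one_mul, mul_assoc, nonsing_inv_mul _ hB, mul_one]

theorem inv_mul_mul_inv_eq_inv_mul_inv_mul (A : Matrix n n R) {S : Matrix n n R}
    (hS : IsUnit S.det) : A⁻¹ * S * A⁻¹ = (A * S⁻¹ * A)⁻¹ := by
  rw [Matrix.mul_inv_rev, Matrix.mul_inv_rev, nonsing_inv_nonsing_inv _ hS, mul_assoc]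

theorem PosDef.transpose_sqrt {S : Matrix n n ℝ} (hS : S.PosDef) :
    hS.posSemidef.sqrtᵀ = hS.posSemidef.sqrt := by
  simpa [IsHermitian] using hS.posSemidef.posSemidef_sqrt.isHermitian

theorem PosDef.isUnit_det_sqrt {S : Matrix n n ℝ} (hS : S.PosDef) :
    IsUnit hS.posSemidef.sqrt.det := by
  refine isUnit_iff_ne_zero.2 fun h => hS.det_pos.ne' ?_
  rw [← hS.posSemidef.sqrt_mul_self, det_mul, h, zero_mul]

theorem map_mulVec_sub_volume {B : Matrix n n ℝ} (hB : IsUnit B.det) (m : n → ℝ) :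
    Measure.map (fun x => B *ᵥ (x - m)) volume = ENNReal.ofReal |B.det⁻¹| • volume := by
  have hdet : LinearMap.det (toLin' B) ≠ 0 := by
    rw [LinearMap.det_toLin']
    exact hB.ne_zero
  have hcomp : (fun x => B *ᵥ (x - m)) = toLin' B ∘ (· - m) := by
    funext x
    simp [toLin'_apply]
  rw [hcomp, ← Measure.map_map (toLin' B).continuous_of_finiteDimensional.measurable
    (measurable_sub_const m), (measurePreserving_sub_right volume m).map_eq,
    Measure.map_linearMap_addHaar_eq_smul_addHaar volume hdet, LinearMap.det_toLin']

theorem setIntegral_preimage_mulVec_sub {E : Type*} [NormedAddCommGroup E] [NormedSpace ℝ E]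
    {B : Matrix n n ℝ} (hB : IsUnit B.det) (m : n → ℝ) (g : (n → ℝ) → E) (T : Set (n → ℝ)) :
    ∫ x in (fun x => B *ᵥ (x - m)) ⁻¹' T, g (B *ᵥ (x - m)) = |B.det|⁻¹ • ∫ z in T, g z := by
  have hdet : LinearMap.det (toLin' B) ≠ 0 := by
    rw [LinearMap.det_toLin']
    exact hB.ne_zero
  let e : (n → ℝ) ≃ᵐ (n → ℝ) := ((Homeomorph.subRight m).trans
    (LinearMap.equivOfDetNeZero (toLin' B) hdet).toContinuousLinearEquiv.toHomeomorph
    ).toMeasurableEquiv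
  have he : ⇑e = fun x => B *ᵥ (x - m) := by
    funext x
    simp [e, toLin'_apply]
  have hmap := setIntegral_map_equiv (μ := volume) e g T
  rw [he, map_mulVec_sub_volume hB] at hmap
  rw [← hmap, Measure.restrict_smul, integral_smul_measure, ENNReal.toReal_ofReal (abs_nonneg _),
    abs_inv]

end Matrix

theorem Real.rpow_neg_half_sq_mul {b s : ℝ} (hs : 0 ≤ s) :
    (b ^ 2 * s) ^ (-(1 : ℝ) / 2) = |b|⁻¹ * s ^ (-(1 : ℝ) / 2) := by
  rw [Real.mul_rpow (sq_nonneg b) hs, ← sq_abs, ← Real.rpow_natCast_mul (abs_nonneg b)]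
  norm_num [Real.rpow_neg_one]

variable {d : ℕ}

theorem mvnPdf_mulVec_sub {B : Matrix (Fin d) (Fin d) ℝ} (hB : IsUnit B.det)
    {μ : Fin d → ℝ} {S : Matrix (Fin d) (Fin d) ℝ} (hS : 0 ≤ S.det) (m x : Fin d → ℝ) :
    mvnPdf (B *ᵥ (μ - m)) (B * S * Bᵀ) (B *ᵥ (x - m)) = |B.det|⁻¹ * mvnPdf μ S x := by
  have hx : B *ᵥ (x - m) - B *ᵥ (μ - m) = B *ᵥ (x - μ) := by
    rw [← mulVec_sub, sub_sub_sub_cancel_right]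
  have hdet : (B * S * Bᵀ).det = B.det ^ 2 * S.det := by
    rw [det_mul, det_mul, det_transpose]
    ring
  unfold mvnPdf
  rw [hx, dotProduct_mulVec_mulVec_self, transpose_mul_inv_mul_mul_transpose_mul hB, hdet,
    Real.rpow_neg_half_sq_mul hS]
  ring

section BayesRegion

variable {𝒴 : Type*}

/-- The event on which the Bayes classifier of the Gaussian classes `N(μ i, S i)` predicts `y`,
`c i` standing for the log prior ratio `log (q i / q y)`. -/
def bayesRegion (μ : 𝒴 → Fin d → ℝ) (S : 𝒴 → Matrix (Fin d) (Fin d) ℝ) (c : 𝒴 → ℝ) (y : 𝒴) :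
    Set (Fin d → ℝ) :=
  {x | ∀ i, Real.log (mvnPdf (μ y) (S y) x / mvnPdf (μ i) (S i) x) ≥ c i}

noncomputable def truePositiveRate (μ : 𝒴 → Fin d → ℝ) (S : 𝒴 → Matrix (Fin d) (Fin d) ℝ)
    (c : 𝒴 → ℝ) (y : 𝒴) : ℝ :=
  ∫ x in bayesRegion μ S c y, mvnPdf (μ y) (S y) x

theorem truePositiveRate_mulVec_sub {B : Matrix (Fin d) (Fin d) ℝ} (hB : IsUnit B.det)
    (m : Fin d → ℝ) {μ : 𝒴 → Fin d → ℝ} {S : 𝒴 → Matrix (Fin d) (Fin d) ℝ}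
    (hS : ∀ i, 0 ≤ (S i).det) (c : 𝒴 → ℝ) (y : 𝒴) :
    truePositiveRate (fun i => B *ᵥ (μ i - m)) (fun i => B * S i * Bᵀ) c y =
      truePositiveRate μ S c y := by
  have hdet : |B.det| ≠ 0 := abs_ne_zero.2 hB.ne_zero
  have hpdf (i : 𝒴) (x : Fin d → ℝ) := mvnPdf_mulVec_sub hB (μ := μ i) (hS i) m x
  have hregion : bayesRegion μ S c y = (fun x => B *ᵥ (x - m)) ⁻¹'
      bayesRegion (fun i => B *ᵥ (μ i - m)) (fun i => B * S i * Bᵀ) c y := by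
    ext x
    simp only [bayesRegion, Set.mem_preimage, Set.mem_ofPred_eq, hpdf,
      mul_div_mul_left _ _ (inv_ne_zero hdet)]
  calc truePositiveRate (fun i => B *ᵥ (μ i - m)) (fun i => B * S i * Bᵀ) c y
      = |B.det| * ∫ x in bayesRegion μ S c y, mvnPdf (B *ᵥ (μ y - m)) (B * S y * Bᵀ)
          (B *ᵥ (x - m)) := by
        rw [hregion, setIntegral_preimage_mulVec_sub hB, smul_eq_mul, mul_inv_cancel_left₀ hdet]
        rfl
    _ = truePositiveRate μ S c y := by
        rw [← integral_const_mul]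
        simp only [hpdf, mul_inv_cancel_left₀ hdet]
        rfl

theorem truePositiveRate_eq_whitened {μ : 𝒴 → Fin d → ℝ} {S : 𝒴 → Matrix (Fin d) (Fin d) ℝ}
    (hS : ∀ i, (S i).PosDef) (c : 𝒴 → ℝ) (y : 𝒴) :
    truePositiveRate μ S c y = truePositiveRate
      (fun i => -((hS y).posSemidef.sqrt⁻¹ *ᵥ (μ y - μ i)))
      (fun i => ((hS y).posSemidef.sqrt * (S i)⁻¹ * (hS y).posSemidef.sqrt)⁻¹) c y := by
  have hB : IsUnit (hS y).posSemidef.sqrt⁻¹.det :=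
    isUnit_nonsing_inv_det _ (hS y).isUnit_det_sqrt
  rw [← truePositiveRate_mulVec_sub hB (μ y) (fun i => (hS i).det_pos.le)]
  congr 1
  · funext i
    rw [← mulVec_neg, neg_sub]
  · funext i
    rw [transpose_nonsing_inv, (hS y).transpose_sqrt,
      inv_mul_mul_inv_eq_inv_mul_inv_mul _ (hS i).det_pos.ne'.isUnit]

end BayesRegion

theorem statement1_general {d : ℕ} {𝒴 𝒜 : Type*}
    (q : 𝒴 → 𝒜 → ℝ)
    (μ : 𝒴 → 𝒜 → (Fin d → ℝ)) (S : 𝒴 → 𝒜 → Matrix (Fin d) (Fin d) ℝ)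
    (hS : ∀ i a, (S i a).PosDef)
    (h1 : ∀ i j a a', ((hS i a).posSemidef.sqrt)⁻¹ *ᵥ (μ i a - μ j a) =
        ((hS i a').posSemidef.sqrt)⁻¹ *ᵥ (μ i a' - μ j a'))
    (h2 : ∀ i j a a',
        (hS i a).posSemidef.sqrt * (S j a)⁻¹ * (hS i a).posSemidef.sqrt =
        (hS i a').posSemidef.sqrt * (S j a')⁻¹ * (hS i a').posSemidef.sqrt)
    (h3 : ∀ i j a a', q i a / q j a = q i a' / q j a') :
    ∀ y a a',
      (∫ x in {x : Fin d → ℝ | ∀ i,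
          Real.log (mvnPdf (μ y a) (S y a) x / mvnPdf (μ i a) (S i a) x) ≥
            Real.log (q i a / q y a)}, mvnPdf (μ y a) (S y a) x) =
      (∫ x in {x : Fin d → ℝ | ∀ i,
          Real.log (mvnPdf (μ y a') (S y a') x / mvnPdf (μ i a') (S i a') x) ≥
            Real.log (q i a' / q y a')}, mvnPdf (μ y a') (S y a') x) := by
  intro y a a'
  have hc : (fun i => Real.log (q i a / q y a)) = fun i => Real.log (q i a' / q y a') :=
    funext fun i => by rw [h3 i y a a']
  change truePositiveRate (μ · a) (S · a) _ y = truePositiveRate (μ · a') (S · a') _ y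
  rw [truePositiveRate_eq_whitened (fun i => hS i a),
    truePositiveRate_eq_whitened (fun i => hS i a'), hc]
  simp only [h1 y _ a a', h2 y _ a a']

/-- under the parametric conditions on the means, covariances, and
class-group probabilities, the group-aware Bayes optimal multi-class classifier,
whose prediction of class `y` in group `a` is the event
`{x | ∀ i, log(p_{ya}(x)/p_{ia}(x)) ≥ log(q_{ia}/q_{ya})}`, has equal class-`y`
true positive rates across all groups (equal opportunity): the probability of this
event under `N(μ_{ya}, Σ_{ya})` is the same for all groups `a`. -/
theorem statement1 {d : ℕ} {𝒴 𝒜 : Type*} [Fintype 𝒴] [Fintype 𝒜]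
    (q : 𝒴 → 𝒜 → ℝ) (hq : ∀ i a, 0 < q i a) (hqsum : ∑ i, ∑ a, q i a = 1)
    (μ : 𝒴 → 𝒜 → (Fin d → ℝ)) (S : 𝒴 → 𝒜 → Matrix (Fin d) (Fin d) ℝ)
    (hS : ∀ i a, (S i a).PosDef)
    (h1 : ∀ i j a a', ((hS i a).posSemidef.sqrt)⁻¹ *ᵥ (μ i a - μ j a) =
        ((hS i a').posSemidef.sqrt)⁻¹ *ᵥ (μ i a' - μ j a'))
    (h2 : ∀ i j a a',
        (hS i a).posSemidef.sqrt * (S j a)⁻¹ * (hS i a).posSemidef.sqrt =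
        (hS i a').posSemidef.sqrt * (S j a')⁻¹ * (hS i a').posSemidef.sqrt)
    (h3 : ∀ i j a a', q i a / q j a = q i a' / q j a') :
    ∀ y a a',
      (∫ x in {x : Fin d → ℝ | ∀ i,
          Real.log (mvnPdf (μ y a) (S y a) x / mvnPdf (μ i a) (S i a) x) ≥
            Real.log (q i a / q y a)}, mvnPdf (μ y a) (S y a) x) =
      (∫ x in {x : Fin d → ℝ | ∀ i,
          Real.log (mvnPdf (μ y a') (S y a') x / mvnPdf (μ i a') (S i a') x) ≥
            Real.log (q i a' / q y a')}, mvnPdf (μ y a') (S y a') x) :=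
  statement1_general q μ S hS h1 h2 h3
end

section
/- Let q_{00}, q_{10} > 0, σ_{ia} > 0 and μ_{ia} ∈ ℝ for i,a ∈ {0,1}, and fix γ > 0. The minimum over μ̃_{00}, μ̃_{10} ∈ ℝ and σ̃_{00}, σ̃_{10} > 0 of the objective Σ_{i∈{0,1}} q_{i0} [ (μ̃_{i0} − μ_{i0})²/(2σ_{i0}²) + (σ̃_{i0}² − σ_{i0}²)/(2σ_{i0}²) + log(σ_{i0}/σ̃_{i0}) ], subject to the constraints σ̃_{00} = γ σ_{01}, σ̃_{10} = γ σ_{11}, and μ̃_{00} − μ̃_{10} = γ(μ_{01} − μ_{11}), equals L*_γ = (1/2)(σ_{00}²/q_{00} + σ_{10}²/q_{10})^{-1} ((μ_{00} − μ_{10}) − γ(μ_{01} − μ_{11}))² + q_{00}(γ² σ_{01}² − σ_{00}²)/(2σ_{00}²) + q_{10}(γ² σ_{11}² − σ_{10}²)/(2σ_{10}²) + (q_{00} + q_{10}) log(1/γ) + q_{00} log(σ_{00}/σ_{01}) + q_{10} log(σ_{10}/σ_{11}). Moreover, the function γ ↦ L*_γ is convex on (0, ∞). -/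
/-!
Under the constraints the variances are fixed, so only the means are free and the objective
splits into a constant (the variance and log terms) plus a weighted least-squares problem
`(α x² + β y²) / 2` in the mean shifts `x, y` with `x - y` prescribed. Its minimum is the
harmonic-mean value `(α⁻¹ + β⁻¹)⁻¹ t² / 2`, by the identity
`α x² + β y² - (α⁻¹ + β⁻¹)⁻¹ (x - y)² = (α x + β y)² / (α + β)`.
As a function of `γ`, `L*_γ` is a convex quadratic minus a positive multiple of `log γ`.
-/

open Real Set

/-- `q · KL(N(a, c²) ‖ N(m, s²))`. -/
noncomputable def weightedGaussianKL (q m s a c : ℝ) : ℝ :=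
  q * ((a - m) ^ 2 / (2 * s ^ 2) + (c ^ 2 - s ^ 2) / (2 * s ^ 2) + log (s / c))

lemma weightedGaussianKL_eq_add (q m s a c : ℝ) :
    weightedGaussianKL q m s a c = q / s ^ 2 * (a - m) ^ 2 / 2 + weightedGaussianKL q m s m c := by
  unfold weightedGaussianKL
  ring

lemma weightedGaussianKL_self_mul {s g t : ℝ} (q m : ℝ) (hs : 0 < s) (hg : 0 < g) (ht : 0 < t) :
    weightedGaussianKL q m s m (g * t) =
      q * (g ^ 2 * t ^ 2 - s ^ 2) / (2 * s ^ 2) + q * log (1 / g) + q * log (s / t) := by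
  have hlog : log (s / (g * t)) = log (1 / g) + log (s / t) := by
    rw [log_div hs.ne' (by positivity), log_mul hg.ne' ht.ne', log_div hs.ne' ht.ne', one_div,
      log_inv]
    ring
  unfold weightedGaussianKL
  rw [hlog]
  ring

lemma isLeast_mul_sq_add_mul_sq_of_sub_eq {α β : ℝ} (hα : 0 < α) (hβ : 0 < β) (t : ℝ) :
    IsLeast {z | ∃ x y, x - y = t ∧ z = α * x ^ 2 + β * y ^ 2} ((α⁻¹ + β⁻¹)⁻¹ * t ^ 2) := by
  have hH : (α⁻¹ + β⁻¹)⁻¹ = α * β / (α + β) := by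
    field_simp
    ring
  rw [hH]
  refine ⟨⟨β * t / (α + β), -(α * t / (α + β)), ?_, ?_⟩, ?_⟩
  · field_simp
    ring
  · field_simp
    ring
  · rintro z ⟨x, y, rfl, rfl⟩
    rw [div_mul_eq_mul_div, div_le_iff₀ (by positivity)]
    nlinarith [sq_nonneg (α * x + β * y)]

lemma isLeast_weightedGaussianKL_add_of_sub_eq {q₀ q₁ s₀ s₁ : ℝ} (hq₀ : 0 < q₀) (hq₁ : 0 < q₁)
    (hs₀ : 0 < s₀) (hs₁ : 0 < s₁) (m₀ m₁ c e d : ℝ) :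
    IsLeast {z | ∃ a b, a - b = d ∧
        z = weightedGaussianKL q₀ m₀ s₀ a c + weightedGaussianKL q₁ m₁ s₁ b e}
      ((s₀ ^ 2 / q₀ + s₁ ^ 2 / q₁)⁻¹ * (d - (m₀ - m₁)) ^ 2 / 2 +
        (weightedGaussianKL q₀ m₀ s₀ m₀ c + weightedGaussianKL q₁ m₁ s₁ m₁ e)) := by
  have hsplit : ∀ a b, weightedGaussianKL q₀ m₀ s₀ a c + weightedGaussianKL q₁ m₁ s₁ b e =
      (q₀ / s₀ ^ 2 * (a - m₀) ^ 2 + q₁ / s₁ ^ 2 * (b - m₁) ^ 2) / 2 +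
        (weightedGaussianKL q₀ m₀ s₀ m₀ c + weightedGaussianKL q₁ m₁ s₁ m₁ e) := by
    intro a b
    rw [weightedGaussianKL_eq_add q₀ m₀ s₀ a, weightedGaussianKL_eq_add q₁ m₁ s₁ b]
    ring
  obtain ⟨⟨x, y, hxy, hmin⟩, hlower⟩ := isLeast_mul_sq_add_mul_sq_of_sub_eq
    (div_pos hq₀ (pow_pos hs₀ 2)) (div_pos hq₁ (pow_pos hs₁ 2)) (d - (m₀ - m₁))
  simp only [inv_div] at hmin hlower
  refine ⟨⟨m₀ + x, m₁ + y, by linarith, by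
    rw [hsplit (m₀ + x) (m₁ + y), hmin, add_sub_cancel_left, add_sub_cancel_left]⟩, ?_⟩
  rintro z ⟨a, b, hab, rfl⟩
  have := hlower ⟨a - m₀, b - m₁, by linarith, rfl⟩
  rw [hsplit a b]
  linarith

lemma convexOn_quadratic {p : ℝ} (hp : 0 ≤ p) (q r : ℝ) :
    ConvexOn ℝ univ (fun x => p * x ^ 2 + q * x + r) := by
  refine ⟨convex_univ, fun x _ y _ a b ha hb hab => ?_⟩
  obtain rfl : b = 1 - a := by linarith
  simp only [smul_eq_mul]
  nlinarith [mul_nonneg hp (mul_nonneg (mul_nonneg ha hb) (sq_nonneg (x - y)))]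

lemma convexOn_quadratic_sub_mul_log {p c : ℝ} (hp : 0 ≤ p) (hc : 0 ≤ c) (q r : ℝ) :
    ConvexOn ℝ (Ioi 0) (fun x => p * x ^ 2 + q * x + r - c * log x) := by
  have hquad := (convexOn_quadratic hp q r).subset (subset_univ _) (convex_Ioi 0)
  have hlog := strictConcaveOn_log_Ioi.neg.convexOn.smul hc
  refine (hquad.add hlog).congr fun x _ => ?_
  simp only [Pi.add_apply, Pi.neg_apply, smul_eq_mul]
  ring

/-- the reduced one-dimensional objective of the univariate Affirmative
Action KL-minimization. For fixed `γ > 0`, the minimum of the KL objective over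
`μ̃₀₀, μ̃₁₀ ∈ ℝ` and `σ̃₀₀, σ̃₁₀ > 0` subject to `σ̃₀₀ = γσ₀₁`, `σ̃₁₀ = γσ₁₁` and
`μ̃₀₀ − μ̃₁₀ = γ(μ₀₁ − μ₁₁)` equals `L*_γ`, and `γ ↦ L*_γ` is convex on `(0, ∞)`. -/
theorem statement7 (q00 q10 : ℝ) (s00 s10 s01 s11 : ℝ) (m00 m10 m01 m11 : ℝ) (γ : ℝ)
    (hq00 : 0 < q00) (hq10 : 0 < q10) (hs00 : 0 < s00) (hs10 : 0 < s10)
    (hs01 : 0 < s01) (hs11 : 0 < s11) (hγ : 0 < γ)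
    (L : ℝ → ℝ)
    (hL : ∀ g : ℝ, L g =
      (1 / 2) * (s00 ^ 2 / q00 + s10 ^ 2 / q10)⁻¹ *
          ((m00 - m10) - g * (m01 - m11)) ^ 2 +
        q00 * (g ^ 2 * s01 ^ 2 - s00 ^ 2) / (2 * s00 ^ 2) +
        q10 * (g ^ 2 * s11 ^ 2 - s10 ^ 2) / (2 * s10 ^ 2) +
        (q00 + q10) * Real.log (1 / g) +
        q00 * Real.log (s00 / s01) + q10 * Real.log (s10 / s11)) :
    IsLeast
      {z : ℝ | ∃ a b c e : ℝ, 0 < c ∧ 0 < e ∧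
        c = γ * s01 ∧ e = γ * s11 ∧ a - b = γ * (m01 - m11) ∧
        z = q00 * ((a - m00) ^ 2 / (2 * s00 ^ 2) + (c ^ 2 - s00 ^ 2) / (2 * s00 ^ 2) +
              Real.log (s00 / c)) +
            q10 * ((b - m10) ^ 2 / (2 * s10 ^ 2) + (e ^ 2 - s10 ^ 2) / (2 * s10 ^ 2) +
              Real.log (s10 / e))}
      (L γ) ∧
    ConvexOn ℝ (Set.Ioi (0 : ℝ)) L := by
  have hLγ : L γ = (s00 ^ 2 / q00 + s10 ^ 2 / q10)⁻¹ * (γ * (m01 - m11) - (m00 - m10)) ^ 2 / 2 +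
      (weightedGaussianKL q00 m00 s00 m00 (γ * s01) +
        weightedGaussianKL q10 m10 s10 m10 (γ * s11)) := by
    rw [hL, weightedGaussianKL_self_mul _ _ hs00 hγ hs01,
      weightedGaussianKL_self_mul _ _ hs10 hγ hs11]
    ring
  obtain ⟨⟨a, b, hab, hmin⟩, hlower⟩ := isLeast_weightedGaussianKL_add_of_sub_eq hq00 hq10 hs00 hs10
    m00 m10 (γ * s01) (γ * s11) (γ * (m01 - m11))
  refine ⟨⟨⟨a, b, γ * s01, γ * s11, by positivity, by positivity, rfl, rfl, hab, hLγ.trans hmin⟩,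
    ?_⟩, ?_⟩
  · rintro z ⟨a, b, c, e, -, -, rfl, rfl, hab, rfl⟩
    exact hLγ ▸ hlower ⟨a, b, hab, rfl⟩
  · set H := (s00 ^ 2 / q00 + s10 ^ 2 / q10)⁻¹
    set P := H / 2 * (m01 - m11) ^ 2 + q00 * s01 ^ 2 / (2 * s00 ^ 2) + q10 * s11 ^ 2 / (2 * s10 ^ 2)
    set Q := -(H * (m00 - m10) * (m01 - m11))
    have hP : 0 ≤ P := by positivity
    -- the constant term is read off at `g = 1`, where the logarithm vanishes
    refine (convexOn_quadratic_sub_mul_log hP (c := q00 + q10) (by positivity) Q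
      (L 1 - P - Q)).congr fun g _ => ?_
    simp only [hL g, hL 1, one_div, log_inv, inv_one, log_one]
    ring
end

section
/- Let q_{ia} > 0 and σ_{ia} > 0 for i,a ∈ {0,1}, and fix γ > 0. The minimum over σ̃_{ia} > 0 of Σ_{i,a ∈ {0,1}} q_{ia} [ (σ̃_{ia}² − σ_{ia}²)/(2σ_{ia}²) + log(σ_{ia}/σ̃_{ia}) ], subject to σ̃_{i1} = γ σ̃_{i0} for i ∈ {0,1}, is attained at σ*_{i0}(γ) = √( (q_{i0} + q_{i1}) / ( q_{i0}/σ_{i0}² + q_{i1} γ²/σ_{i1}² ) ) and σ*_{i1}(γ) = γ σ*_{i0}(γ), for i ∈ {0,1}. -/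
private lemma key8 (A B x y : ℝ) (hA : 0 < A) (hB : 0 < B) (hx : 0 < x) (hy : 0 < y)
    (hAy : A * y ^ 2 = B) :
    A * y ^ 2 / 2 - B * Real.log y ≤ A * x ^ 2 / 2 - B * Real.log x := by
  have hlog : Real.log x - Real.log y ≤ x / y - 1 := by
    have h := Real.log_le_sub_one_of_pos (show 0 < x / y from div_pos hx hy)
    rwa [Real.log_div hx.ne' hy.ne'] at h
  have h2 : B * (x / y - 1) ≤ A * x ^ 2 / 2 - A * y ^ 2 / 2 := by
    rw [← hAy]
    have hyne : y ≠ 0 := hy.ne'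
    rw [div_sub_one hyne]
    have hrw : A * y ^ 2 * ((x - y) / y) = A * y * (x - y) := by
      field_simp
    rw [hrw]
    nlinarith [sq_nonneg (x - y), hA.le, hy.le]
  nlinarith [mul_le_mul_of_nonneg_left hlog hB.le]

private lemma per8 (q0 q1 s0 s1 γ x : ℝ) (hq0 : 0 < q0) (hq1 : 0 < q1)
    (hs0 : 0 < s0) (hs1 : 0 < s1) (hγ : 0 < γ) (hx : 0 < x) :
    q0 * ((Real.sqrt ((q0 + q1) / (q0 / s0 ^ 2 + q1 * γ ^ 2 / s1 ^ 2)) ^ 2 - s0 ^ 2) / (2 * s0 ^ 2)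
        + Real.log (s0 / Real.sqrt ((q0 + q1) / (q0 / s0 ^ 2 + q1 * γ ^ 2 / s1 ^ 2))))
      + q1 * (((γ * Real.sqrt ((q0 + q1) / (q0 / s0 ^ 2 + q1 * γ ^ 2 / s1 ^ 2))) ^ 2 - s1 ^ 2) / (2 * s1 ^ 2)
        + Real.log (s1 / (γ * Real.sqrt ((q0 + q1) / (q0 / s0 ^ 2 + q1 * γ ^ 2 / s1 ^ 2)))))
    ≤ q0 * ((x ^ 2 - s0 ^ 2) / (2 * s0 ^ 2) + Real.log (s0 / x))
      + q1 * (((γ * x) ^ 2 - s1 ^ 2) / (2 * s1 ^ 2) + Real.log (s1 / (γ * x))) := by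
  set A : ℝ := q0 / s0 ^ 2 + q1 * γ ^ 2 / s1 ^ 2 with hAdef
  set B : ℝ := q0 + q1 with hBdef
  have hA : 0 < A := by positivity
  have hB : 0 < B := by positivity
  set y : ℝ := Real.sqrt (B / A) with hydef
  have hy : 0 < y := Real.sqrt_pos.mpr (div_pos hB hA)
  have hAy : A * y ^ 2 = B := by
    rw [hydef, Real.sq_sqrt (div_pos hB hA).le]
    field_simp
  have hk := key8 A B x y hA hB hx hy hAy
  have eq1 : ∀ z : ℝ, 0 < z →
      q0 * ((z ^ 2 - s0 ^ 2) / (2 * s0 ^ 2) + Real.log (s0 / z))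
        + q1 * (((γ * z) ^ 2 - s1 ^ 2) / (2 * s1 ^ 2) + Real.log (s1 / (γ * z)))
      = A * z ^ 2 / 2 - B * Real.log z
        + (q0 * Real.log s0 + q1 * Real.log s1 - q1 * Real.log γ - (q0 + q1) / 2) := by
    intro z hz
    rw [Real.log_div hs0.ne' hz.ne', Real.log_div hs1.ne' (by positivity : (γ * z) ≠ 0),
        Real.log_mul hγ.ne' hz.ne', hAdef, hBdef]
    field_simp
    ring
  rw [eq1 x hx, eq1 y hy]
  linarith

/-- the variance-optimization step, for fixed variance-ratio `γ > 0`,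
of the all-subgroups exact-fairness KL-minimization. The minimum over `σ̃_{ia} > 0`
of `Σ_{i,a} q_{ia} [(σ̃_{ia}² − σ_{ia}²)/(2σ_{ia}²) + log(σ_{ia}/σ̃_{ia})]` subject
to `σ̃_{i1} = γ σ̃_{i0}` is attained at
`σ*_{i0}(γ) = √((q_{i0} + q_{i1})/(q_{i0}/σ_{i0}² + q_{i1}γ²/σ_{i1}²))` and
`σ*_{i1}(γ) = γ σ*_{i0}(γ)`. -/
theorem statement8 (q s : Fin 2 → Fin 2 → ℝ)
    (hq : ∀ i a, 0 < q i a) (hs : ∀ i a, 0 < s i a) (γ : ℝ) (hγ : 0 < γ) :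
    letI σstar : Fin 2 → Fin 2 → ℝ := fun i a =>
      if a = 0 then
        Real.sqrt ((q i 0 + q i 1) / (q i 0 / s i 0 ^ 2 + q i 1 * γ ^ 2 / s i 1 ^ 2))
      else
        γ * Real.sqrt ((q i 0 + q i 1) / (q i 0 / s i 0 ^ 2 + q i 1 * γ ^ 2 / s i 1 ^ 2))
    letI obj : (Fin 2 → Fin 2 → ℝ) → ℝ := fun t =>
      ∑ i : Fin 2, ∑ a : Fin 2,
        q i a * ((t i a ^ 2 - s i a ^ 2) / (2 * s i a ^ 2) + Real.log (s i a / t i a))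
    (∀ i a, 0 < σstar i a) ∧ (∀ i, σstar i 1 = γ * σstar i 0) ∧
      ∀ t : Fin 2 → Fin 2 → ℝ, (∀ i a, 0 < t i a) → (∀ i, t i 1 = γ * t i 0) →
        obj σstar ≤ obj t := by
  have hpos : ∀ i : Fin 2, 0 < Real.sqrt ((q i 0 + q i 1) / (q i 0 / s i 0 ^ 2 + q i 1 * γ ^ 2 / s i 1 ^ 2)) := by
    intro i
    apply Real.sqrt_pos.mpr
    have := hq i 0; have := hq i 1; have := hs i 0; have := hs i 1
    positivity
  refine ⟨?_, ?_, ?_⟩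
  · intro i a
    have h0 := hq i 0; have h1 := hq i 1; have hs0 := hs i 0; have hs1 := hs i 1
    fin_cases a <;> norm_num
    · positivity
    · exact mul_pos hγ (hpos i)
  · intro i
    norm_num
  · intro t ht htγ
    have hper : ∀ i : Fin 2, t i 1 = γ * t i 0 → 0 < t i 0 →
        (q i 0 * ((Real.sqrt ((q i 0 + q i 1) / (q i 0 / s i 0 ^ 2 + q i 1 * γ ^ 2 / s i 1 ^ 2)) ^ 2 - s i 0 ^ 2) / (2 * s i 0 ^ 2)
            + Real.log (s i 0 / Real.sqrt ((q i 0 + q i 1) / (q i 0 / s i 0 ^ 2 + q i 1 * γ ^ 2 / s i 1 ^ 2))))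
          + q i 1 * (((γ * Real.sqrt ((q i 0 + q i 1) / (q i 0 / s i 0 ^ 2 + q i 1 * γ ^ 2 / s i 1 ^ 2))) ^ 2 - s i 1 ^ 2) / (2 * s i 1 ^ 2)
            + Real.log (s i 1 / (γ * Real.sqrt ((q i 0 + q i 1) / (q i 0 / s i 0 ^ 2 + q i 1 * γ ^ 2 / s i 1 ^ 2))))))
        ≤ q i 0 * ((t i 0 ^ 2 - s i 0 ^ 2) / (2 * s i 0 ^ 2) + Real.log (s i 0 / t i 0))
          + q i 1 * ((t i 1 ^ 2 - s i 1 ^ 2) / (2 * s i 1 ^ 2) + Real.log (s i 1 / t i 1)) := by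
      intro i hti hti0
      rw [hti]
      exact per8 (q i 0) (q i 1) (s i 0) (s i 1) γ (t i 0)
        (hq i 0) (hq i 1) (hs i 0) (hs i 1) hγ (ht i 0)
    simp only [Fin.sum_univ_two]
    norm_num
    exact add_le_add (hper 0 (htγ 0) (ht 0 0)) (hper 1 (htγ 1) (ht 1 0))
end

section
/- Let q_{ia} > 0, σ_{ia} > 0 and μ_{ia} ∈ ℝ for i,a ∈ {0,1}, and fix γ > 0. Define λ = ( γ(μ_{00} − μ_{10}) − (μ_{01} − μ_{11}) ) / ( σ_{01}²/q_{01} + σ_{11}²/q_{11} + γ²(σ_{00}²/q_{00} + σ_{10}²/q_{10}) ). Then the minimum over μ̃_{ia} ∈ ℝ of Σ_{i,a ∈ {0,1}} q_{ia} (μ̃_{ia} − μ_{ia})²/(2σ_{ia}²), subject to the constraint μ̃_{01} − μ̃_{11} = γ(μ̃_{00} − μ̃_{10}), is attained at μ*_{00}(γ) = μ_{00} − γλ σ_{00}²/q_{00}, μ*_{01}(γ) = μ_{01} + λ σ_{01}²/q_{01}, μ*_{10}(γ) = μ_{10} + γλ σ_{10}²/q_{10}, μ*_{11}(γ) = μ_{11}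 − λ σ_{11}²/q_{11}, and the minimum value equals (1/2) · ( γ(μ_{00} − μ_{10}) − (μ_{01} − μ_{11}) )² / ( σ_{01}²/q_{01} + σ_{11}²/q_{11} + γ²(σ_{00}²/q_{00} + σ_{10}²/q_{10}) ). -/
lemma key_ineq (a b e f γ x y z w : ℝ) (ha : 0 < a) (hb : 0 < b) (he : 0 < e)
    (hf : 0 < f) :
    (y - w - γ*x + γ*z)^2 / (2*(a + b + γ^2*(e + f))) ≤
      x^2/(2*e) + y^2/(2*a) + z^2/(2*f) + w^2/(2*b) := by
  set c : ℝ := y - w - γ*x + γ*z with hc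
  set D : ℝ := a + b + γ^2*(e + f) with hD
  have hDpos : 0 < D := by positivity
  have H : D*(x^2*(a*f*b) + y^2*(e*f*b) + z^2*(e*a*b) + w^2*(e*a*f)) -
      c^2*(e*a*f*b) =
      e*f*(a*w+b*y)^2 + b*f*(a*x+γ*e*y)^2 + b*e*(a*z-γ*f*y)^2 +
      a*f*(γ*e*w-b*x)^2 + a*e*(b*z+γ*f*w)^2 + a*b*γ^2*(e*z+f*x)^2 := by
    rw [hc, hD]; ring
  rw [div_le_iff₀ (by positivity), ← sub_nonneg]
  have key : (x^2/(2*e) + y^2/(2*a) + z^2/(2*f) + w^2/(2*b))*(2*D) - c^2 =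
      (D*(x^2*(a*f*b) + y^2*(e*f*b) + z^2*(e*a*b) + w^2*(e*a*f)) -
        c^2*(e*a*f*b)) / (e*a*f*b) := by
    field_simp
  rw [key, H]
  positivity

/-- the mean-optimization step, for fixed ratio `γ > 0`, of the
all-subgroups exact-fairness KL-minimization. With
`λ = (γ(μ₀₀ − μ₁₀) − (μ₀₁ − μ₁₁)) / (σ₀₁²/q₀₁ + σ₁₁²/q₁₁ + γ²(σ₀₀²/q₀₀ + σ₁₀²/q₁₀))`,
the minimum of `Σ_{i,a} q_{ia} (μ̃_{ia} − μ_{ia})²/(2σ_{ia}²)` subject to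
`μ̃₀₁ − μ̃₁₁ = γ(μ̃₀₀ − μ̃₁₀)` is attained at the stated `μ*_{ia}(γ)` and equals
`(1/2)(γ(μ₀₀ − μ₁₀) − (μ₀₁ − μ₁₁))² / (σ₀₁²/q₀₁ + σ₁₁²/q₁₁ + γ²(σ₀₀²/q₀₀ + σ₁₀²/q₁₀))`. -/
theorem statement9 (q s m : Fin 2 → Fin 2 → ℝ)
    (hq : ∀ i a, 0 < q i a) (hs : ∀ i a, 0 < s i a) (γ : ℝ) (hγ : 0 < γ) :
    letI lam : ℝ := (γ * (m 0 0 - m 1 0) - (m 0 1 - m 1 1)) /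
      (s 0 1 ^ 2 / q 0 1 + s 1 1 ^ 2 / q 1 1 +
        γ ^ 2 * (s 0 0 ^ 2 / q 0 0 + s 1 0 ^ 2 / q 1 0))
    letI μstar : Fin 2 → Fin 2 → ℝ :=
      ![![m 0 0 - γ * lam * s 0 0 ^ 2 / q 0 0, m 0 1 + lam * s 0 1 ^ 2 / q 0 1],
        ![m 1 0 + γ * lam * s 1 0 ^ 2 / q 1 0, m 1 1 - lam * s 1 1 ^ 2 / q 1 1]]
    letI obj : (Fin 2 → Fin 2 → ℝ) → ℝ := fun t =>
      ∑ i : Fin 2, ∑ a : Fin 2, q i a * (t i a - m i a) ^ 2 / (2 * s i a ^ 2)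
    (μstar 0 1 - μstar 1 1 = γ * (μstar 0 0 - μstar 1 0)) ∧
      (∀ t : Fin 2 → Fin 2 → ℝ,
        t 0 1 - t 1 1 = γ * (t 0 0 - t 1 0) → obj μstar ≤ obj t) ∧
      obj μstar = (1 / 2) * (γ * (m 0 0 - m 1 0) - (m 0 1 - m 1 1)) ^ 2 /
        (s 0 1 ^ 2 / q 0 1 + s 1 1 ^ 2 / q 1 1 +
          γ ^ 2 * (s 0 0 ^ 2 / q 0 0 + s 1 0 ^ 2 / q 1 0)) := by
  have hq00 := hq 0 0; have hq01 := hq 0 1; have hq10 := hq 1 0; have hq11 := hq 1 1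
  have hs00 := hs 0 0; have hs01 := hs 0 1; have hs10 := hs 1 0; have hs11 := hs 1 1
  have hD : s 0 1 ^ 2 / q 0 1 + s 1 1 ^ 2 / q 1 1 +
      γ ^ 2 * (s 0 0 ^ 2 / q 0 0 + s 1 0 ^ 2 / q 1 0) ≠ 0 := by positivity
  simp only [Fin.isValue, Matrix.cons_val', Matrix.cons_val_zero, Matrix.cons_val_one,
    Matrix.head_cons, Matrix.empty_val', Matrix.cons_val_fin_one, Matrix.head_fin_const,
    Fin.sum_univ_two]
  set c : ℝ := γ * (m 0 0 - m 1 0) - (m 0 1 - m 1 1) with hc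
  set L : ℝ := c / (s 0 1 ^ 2 / q 0 1 + s 1 1 ^ 2 / q 1 1 +
      γ ^ 2 * (s 0 0 ^ 2 / q 0 0 + s 1 0 ^ 2 / q 1 0)) with hL
  have hkey : L * (s 0 1 ^ 2 / q 0 1 + s 1 1 ^ 2 / q 1 1 +
      γ ^ 2 * (s 0 0 ^ 2 / q 0 0 + s 1 0 ^ 2 / q 1 0)) = c := by
    rw [hL]; exact div_mul_cancel₀ c hD
  have hval : q 0 0 * (m 0 0 - γ * L * s 0 0 ^ 2 / q 0 0 - m 0 0) ^ 2 / (2 * s 0 0 ^ 2) +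
      q 0 1 * (m 0 1 + L * s 0 1 ^ 2 / q 0 1 - m 0 1) ^ 2 / (2 * s 0 1 ^ 2) +
      (q 1 0 * (m 1 0 + γ * L * s 1 0 ^ 2 / q 1 0 - m 1 0) ^ 2 / (2 * s 1 0 ^ 2) +
      q 1 1 * (m 1 1 - L * s 1 1 ^ 2 / q 1 1 - m 1 1) ^ 2 / (2 * s 1 1 ^ 2)) =
      1 / 2 * c * L := by
    have t1 : q 0 0 * (m 0 0 - γ * L * s 0 0 ^ 2 / q 0 0 - m 0 0) ^ 2 / (2 * s 0 0 ^ 2) =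
        γ ^ 2 * L ^ 2 * (s 0 0 ^ 2 / q 0 0) / 2 := by
      field_simp; ring
    have t2 : q 0 1 * (m 0 1 + L * s 0 1 ^ 2 / q 0 1 - m 0 1) ^ 2 / (2 * s 0 1 ^ 2) =
        L ^ 2 * (s 0 1 ^ 2 / q 0 1) / 2 := by
      field_simp; ring
    have t3 : q 1 0 * (m 1 0 + γ * L * s 1 0 ^ 2 / q 1 0 - m 1 0) ^ 2 / (2 * s 1 0 ^ 2) =
        γ ^ 2 * L ^ 2 * (s 1 0 ^ 2 / q 1 0) / 2 := by
      field_simp; ring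
    have t4 : q 1 1 * (m 1 1 - L * s 1 1 ^ 2 / q 1 1 - m 1 1) ^ 2 / (2 * s 1 1 ^ 2) =
        L ^ 2 * (s 1 1 ^ 2 / q 1 1) / 2 := by
      field_simp; ring
    rw [t1, t2, t3, t4]
    linear_combination (L / 2) * hkey
  have h2 : 1 / 2 * c ^ 2 / (s 0 1 ^ 2 / q 0 1 + s 1 1 ^ 2 / q 1 1 +
      γ ^ 2 * (s 0 0 ^ 2 / q 0 0 + s 1 0 ^ 2 / q 1 0)) = 1 / 2 * c * L := by
    rw [hL]; ring
  refine ⟨?_, fun t ht => ?_, hval.trans h2.symm⟩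
  · linear_combination hkey
  · rw [hval]
    have hsum : q 0 0 * (t 0 0 - m 0 0) ^ 2 / (2 * s 0 0 ^ 2) +
        q 0 1 * (t 0 1 - m 0 1) ^ 2 / (2 * s 0 1 ^ 2) +
        (q 1 0 * (t 1 0 - m 1 0) ^ 2 / (2 * s 1 0 ^ 2) +
        q 1 1 * (t 1 1 - m 1 1) ^ 2 / (2 * s 1 1 ^ 2)) =
        (t 0 0 - m 0 0)^2/(2*(s 0 0 ^ 2 / q 0 0)) +
        (t 0 1 - m 0 1)^2/(2*(s 0 1 ^ 2 / q 0 1)) +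
        (t 1 0 - m 1 0)^2/(2*(s 1 0 ^ 2 / q 1 0)) +
        (t 1 1 - m 1 1)^2/(2*(s 1 1 ^ 2 / q 1 1)) := by
      field_simp
      ring
    rw [hsum]
    have hc' : (t 0 1 - m 0 1) - (t 1 1 - m 1 1) - γ*(t 0 0 - m 0 0) +
        γ*(t 1 0 - m 1 0) = c := by rw [hc]; linarith [ht]
    have hk := key_ineq (s 0 1 ^ 2 / q 0 1) (s 1 1 ^ 2 / q 1 1) (s 0 0 ^ 2 / q 0 0)
      (s 1 0 ^ 2 / q 1 0) γ (t 0 0 - m 0 0) (t 0 1 - m 0 1) (t 1 0 - m 1 0)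
      (t 1 1 - m 1 1) (by positivity) (by positivity) (by positivity) (by positivity)
    rw [hc', ← div_div] at hk
    have h3 : c ^ 2 / 2 / (s 0 1 ^ 2 / q 0 1 + s 1 1 ^ 2 / q 1 1 +
        γ ^ 2 * (s 0 0 ^ 2 / q 0 0 + s 1 0 ^ 2 / q 1 0)) = 1 / 2 * c * L := by
      rw [hL]; ring
    calc 1 / 2 * c * L = c ^ 2 / 2 / (s 0 1 ^ 2 / q 0 1 + s 1 1 ^ 2 / q 1 1 +
        γ ^ 2 * (s 0 0 ^ 2 / q 0 0 + s 1 0 ^ 2 / q 1 0)) := h3.symm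
    _ ≤ _ := hk
end

section
/- Let q_{ia} > 0, σ_{ia} > 0 and μ_{ia} ∈ ℝ for i,a ∈ {0,1}, and let γ > 0. The minimum over μ̃_{ia} ∈ ℝ and σ̃_{ia} > 0 of the KL objective Σ_{i,a} q_{ia} [ (μ̃_{ia} − μ_{ia})²/(2σ_{ia}²) + (σ̃_{ia}² − σ_{ia}²)/(2σ_{ia}²) + log(σ_{ia}/σ̃_{ia}) ], subject to the constraints μ̃_{01} − μ̃_{11} = γ(μ̃_{00} − μ̃_{10}) and σ̃_{i1} = γ σ̃_{i0} for i ∈ {0,1}, equals L*_γ = (1/2) ( γ(μ_{00} − μ_{10}) − (μ_{01} − μ_{11}) )² / ( σ_{01}²/q_{01} + σ_{11}²/q_{11} + γ²(σ_{00}²/q_{00} + σ_{10}²/q_{10}) ) + Σ_{i∈{0,1}} [ ((q_{i0} + q_{i1})/2) log( q_{i0}/q_{i1} + γ² σ_{i0}²/σ_{i1}² ) − ((q_{i0} + q_{i1})/2) log( q_{i0}/q_{i1} + 1 ) − q_{i1} log γ − q_{i1} log(σ_{i0}/σ_{i1}) ]. -/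
lemma log_aux (x : ℝ) (hx : 0 < x) : 0 ≤ x - 1 - Real.log x := by
  have := Real.log_le_sub_one_of_pos hx; linarith

lemma varkey (q0 q1 s0 s1 γ u : ℝ) (hq0 : 0 < q0) (hq1 : 0 < q1)
    (hs0 : 0 < s0) (hs1 : 0 < s1) (hγ : 0 < γ) (hu : 0 < u) :
    q0 * ((u ^ 2 - s0 ^ 2) / (2 * s0 ^ 2) + Real.log (s0 / u)) +
      q1 * (((γ * u) ^ 2 - s1 ^ 2) / (2 * s1 ^ 2) + Real.log (s1 / (γ * u))) =
    ((q0 + q1) / 2 * Real.log (q0 / q1 + γ ^ 2 * s0 ^ 2 / s1 ^ 2) -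
      (q0 + q1) / 2 * Real.log (q0 / q1 + 1) -
      q1 * Real.log γ - q1 * Real.log (s0 / s1)) +
    (q0 + q1) / 2 *
      ((q0 / s0 ^ 2 + q1 * γ ^ 2 / s1 ^ 2) * u ^ 2 / (q0 + q1) - 1 -
        Real.log ((q0 / s0 ^ 2 + q1 * γ ^ 2 / s1 ^ 2) * u ^ 2 / (q0 + q1))) := by
  have hA : 0 < q0 / s0 ^ 2 + q1 * γ ^ 2 / s1 ^ 2 := by positivity
  have hB : 0 < q0 + q1 := by linarith
  have e1 : q0 / q1 + γ ^ 2 * s0 ^ 2 / s1 ^ 2 =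
      (q0 / s0 ^ 2 + q1 * γ ^ 2 / s1 ^ 2) * s0 ^ 2 / q1 := by
    field_simp
  have e2 : q0 / q1 + 1 = (q0 + q1) / q1 := by field_simp
  have h1 : Real.log (s0 / u) = Real.log s0 - Real.log u :=
    Real.log_div hs0.ne' hu.ne'
  have h2 : Real.log (s1 / (γ * u)) = Real.log s1 - (Real.log γ + Real.log u) := by
    rw [Real.log_div hs1.ne' (by positivity), Real.log_mul hγ.ne' hu.ne']
  have h3 : Real.log (q0 / q1 + γ ^ 2 * s0 ^ 2 / s1 ^ 2) =
      Real.log (q0 / s0 ^ 2 + q1 * γ ^ 2 / s1 ^ 2) + 2 * Real.log s0 - Real.log q1 := by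
    rw [e1, Real.log_div (by positivity) hq1.ne', Real.log_mul hA.ne' (by positivity),
      Real.log_pow]
    push_cast; ring
  have h4 : Real.log (q0 / q1 + 1) = Real.log (q0 + q1) - Real.log q1 := by
    rw [e2, Real.log_div hB.ne' hq1.ne']
  have h5 : Real.log (s0 / s1) = Real.log s0 - Real.log s1 :=
    Real.log_div hs0.ne' hs1.ne'
  have h6 : Real.log ((q0 / s0 ^ 2 + q1 * γ ^ 2 / s1 ^ 2) * u ^ 2 / (q0 + q1)) =
      Real.log (q0 / s0 ^ 2 + q1 * γ ^ 2 / s1 ^ 2) + 2 * Real.log u - Real.log (q0 + q1) := by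
    rw [Real.log_div (by positivity) hB.ne', Real.log_mul hA.ne' (by positivity),
      Real.log_pow]
    push_cast; ring
  rw [h1, h2, h3, h4, h5, h6]
  field_simp
  ring

lemma meancore (w00 w10 w01 w11 d00 d10 d01 d11 a00 a10 a01 a11 γ lam N D : ℝ)
    (h00 : w00 * d00 = 1) (h10 : w10 * d10 = 1) (h01 : w01 * d01 = 1) (h11 : w11 * d11 = 1)
    (hD : D = d01 + d11 + γ ^ 2 * (d00 + d10))
    (hN : a01 - a11 - γ * a00 + γ * a10 = N)
    (hlam : lam * D = N) :
    w00 / 2 * a00 ^ 2 + w10 / 2 * a10 ^ 2 + w01 / 2 * a01 ^ 2 + w11 / 2 * a11 ^ 2 =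
    lam ^ 2 * D / 2 + w00 / 2 * (a00 + lam * γ * d00) ^ 2 +
      w10 / 2 * (a10 - lam * γ * d10) ^ 2 + w01 / 2 * (a01 - lam * d01) ^ 2 +
      w11 / 2 * (a11 + lam * d11) ^ 2 := by
  linear_combination (-(lam*γ*a00) - lam^2*γ^2*d00/2) * h00 +
    (lam*γ*a10 - lam^2*γ^2*d10/2) * h10 +
    (lam*a01 - lam^2*d01/2) * h01 +
    (-(lam*a11) - lam^2*d11/2) * h11 +
    (lam^2/2) * hD + lam * hN + (-lam) * hlam

lemma lb (q00 q01 q10 q11 s00 s01 s10 s11 m00 m01 m10 m11 t00 t01 t10 t11 u00 u10 γ : ℝ)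
    (hq00 : 0 < q00) (hq01 : 0 < q01) (hq10 : 0 < q10) (hq11 : 0 < q11)
    (hs00 : 0 < s00) (hs01 : 0 < s01) (hs10 : 0 < s10) (hs11 : 0 < s11)
    (hγ : 0 < γ) (hu00 : 0 < u00) (hu10 : 0 < u10)
    (ht : t01 - t11 = γ * (t00 - t10)) :
    1 / 2 * (γ * (m00 - m10) - (m01 - m11)) ^ 2 /
        (s01 ^ 2 / q01 + s11 ^ 2 / q11 + γ ^ 2 * (s00 ^ 2 / q00 + s10 ^ 2 / q10)) +
      ((q00 + q01) / 2 * Real.log (q00 / q01 + γ ^ 2 * s00 ^ 2 / s01 ^ 2) -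
          (q00 + q01) / 2 * Real.log (q00 / q01 + 1) - q01 * Real.log γ -
          q01 * Real.log (s00 / s01) +
        ((q10 + q11) / 2 * Real.log (q10 / q11 + γ ^ 2 * s10 ^ 2 / s11 ^ 2) -
          (q10 + q11) / 2 * Real.log (q10 / q11 + 1) - q11 * Real.log γ -
          q11 * Real.log (s10 / s11))) ≤
    q00 * ((t00 - m00) ^ 2 / (2 * s00 ^ 2) + (u00 ^ 2 - s00 ^ 2) / (2 * s00 ^ 2) +
        Real.log (s00 / u00)) +
      q01 * ((t01 - m01) ^ 2 / (2 * s01 ^ 2) + ((γ * u00) ^ 2 - s01 ^ 2) / (2 * s01 ^ 2) +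
        Real.log (s01 / (γ * u00))) +
      (q10 * ((t10 - m10) ^ 2 / (2 * s10 ^ 2) + (u10 ^ 2 - s10 ^ 2) / (2 * s10 ^ 2) +
        Real.log (s10 / u10)) +
       q11 * ((t11 - m11) ^ 2 / (2 * s11 ^ 2) + ((γ * u10) ^ 2 - s11 ^ 2) / (2 * s11 ^ 2) +
        Real.log (s11 / (γ * u10)))) := by
  have hsplit :
      q00 * ((t00 - m00) ^ 2 / (2 * s00 ^ 2) + (u00 ^ 2 - s00 ^ 2) / (2 * s00 ^ 2) +
          Real.log (s00 / u00)) +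
        q01 * ((t01 - m01) ^ 2 / (2 * s01 ^ 2) + ((γ * u00) ^ 2 - s01 ^ 2) / (2 * s01 ^ 2) +
          Real.log (s01 / (γ * u00))) +
        (q10 * ((t10 - m10) ^ 2 / (2 * s10 ^ 2) + (u10 ^ 2 - s10 ^ 2) / (2 * s10 ^ 2) +
          Real.log (s10 / u10)) +
         q11 * ((t11 - m11) ^ 2 / (2 * s11 ^ 2) + ((γ * u10) ^ 2 - s11 ^ 2) / (2 * s11 ^ 2) +
          Real.log (s11 / (γ * u10)))) =
      (q00 / s00 ^ 2 / 2 * (t00 - m00) ^ 2 + q10 / s10 ^ 2 / 2 * (t10 - m10) ^ 2 +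
        q01 / s01 ^ 2 / 2 * (t01 - m01) ^ 2 + q11 / s11 ^ 2 / 2 * (t11 - m11) ^ 2) +
      ((q00 * ((u00 ^ 2 - s00 ^ 2) / (2 * s00 ^ 2) + Real.log (s00 / u00)) +
        q01 * (((γ * u00) ^ 2 - s01 ^ 2) / (2 * s01 ^ 2) + Real.log (s01 / (γ * u00)))) +
       (q10 * ((u10 ^ 2 - s10 ^ 2) / (2 * s10 ^ 2) + Real.log (s10 / u10)) +
        q11 * (((γ * u10) ^ 2 - s11 ^ 2) / (2 * s11 ^ 2) + Real.log (s11 / (γ * u10))))) := by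
    ring
  rw [hsplit]
  set N := γ * (m00 - m10) - (m01 - m11) with hN
  set D := s01 ^ 2 / q01 + s11 ^ 2 / q11 + γ ^ 2 * (s00 ^ 2 / q00 + s10 ^ 2 / q10) with hD
  have hDpos : 0 < D := by rw [hD]; positivity
  set lam := N / D with hlamdef
  have hlam : lam * D = N := div_mul_cancel₀ N hDpos.ne'
  have h00 : q00 / s00 ^ 2 * (s00 ^ 2 / q00) = 1 := by field_simp
  have h10 : q10 / s10 ^ 2 * (s10 ^ 2 / q10) = 1 := by field_simp
  have h01 : q01 / s01 ^ 2 * (s01 ^ 2 / q01) = 1 := by field_simp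
  have h11 : q11 / s11 ^ 2 * (s11 ^ 2 / q11) = 1 := by field_simp
  have hNc : (t01 - m01) - (t11 - m11) - γ * (t00 - m00) + γ * (t10 - m10) = N := by
    rw [hN]; linear_combination ht
  have hm := meancore (q00 / s00 ^ 2) (q10 / s10 ^ 2) (q01 / s01 ^ 2) (q11 / s11 ^ 2)
    (s00 ^ 2 / q00) (s10 ^ 2 / q10) (s01 ^ 2 / q01) (s11 ^ 2 / q11)
    (t00 - m00) (t10 - m10) (t01 - m01) (t11 - m11) γ lam N D h00 h10 h01 h11 hD hNc hlam
  have hk0 := varkey q00 q01 s00 s01 γ u00 hq00 hq01 hs00 hs01 hγ hu00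
  have hk1 := varkey q10 q11 s10 s11 γ u10 hq10 hq11 hs10 hs11 hγ hu10
  have hx0 : 0 < (q00 / s00 ^ 2 + q01 * γ ^ 2 / s01 ^ 2) * u00 ^ 2 / (q00 + q01) := by
    positivity
  have hx1 : 0 < (q10 / s10 ^ 2 + q11 * γ ^ 2 / s11 ^ 2) * u10 ^ 2 / (q10 + q11) := by
    positivity
  have hl0 : 0 ≤ (q00 + q01) / 2 *
      ((q00 / s00 ^ 2 + q01 * γ ^ 2 / s01 ^ 2) * u00 ^ 2 / (q00 + q01) - 1 -
        Real.log ((q00 / s00 ^ 2 + q01 * γ ^ 2 / s01 ^ 2) * u00 ^ 2 / (q00 + q01))) :=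
    mul_nonneg (by positivity) (log_aux _ hx0)
  have hl1 : 0 ≤ (q10 + q11) / 2 *
      ((q10 / s10 ^ 2 + q11 * γ ^ 2 / s11 ^ 2) * u10 ^ 2 / (q10 + q11) - 1 -
        Real.log ((q10 / s10 ^ 2 + q11 * γ ^ 2 / s11 ^ 2) * u10 ^ 2 / (q10 + q11))) :=
    mul_nonneg (by positivity) (log_aux _ hx1)
  have e1 : 1 / 2 * N ^ 2 / D = lam ^ 2 * D / 2 := by
    rw [← hlam]; field_simp
  have sq0 : 0 ≤ q00 / s00 ^ 2 / 2 * ((t00 - m00) + lam * γ * (s00 ^ 2 / q00)) ^ 2 := by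
    positivity
  have sq1 : 0 ≤ q10 / s10 ^ 2 / 2 * ((t10 - m10) - lam * γ * (s10 ^ 2 / q10)) ^ 2 := by
    positivity
  have sq2 : 0 ≤ q01 / s01 ^ 2 / 2 * ((t01 - m01) - lam * (s01 ^ 2 / q01)) ^ 2 := by
    positivity
  have sq3 : 0 ≤ q11 / s11 ^ 2 / 2 * ((t11 - m11) + lam * (s11 ^ 2 / q11)) ^ 2 := by
    positivity
  linarith [hm, hk0, hk1, hl0, hl1, e1, sq0, sq1, sq2, sq3]

lemma memval (q00 q01 q10 q11 s00 s01 s10 s11 m00 m01 m10 m11 lam v0 v1 γ : ℝ)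
    (hq00 : 0 < q00) (hq01 : 0 < q01) (hq10 : 0 < q10) (hq11 : 0 < q11)
    (hs00 : 0 < s00) (hs01 : 0 < s01) (hs10 : 0 < s10) (hs11 : 0 < s11)
    (hγ : 0 < γ) (hv0 : 0 < v0) (hv1 : 0 < v1)
    (hlam : lam * (s01 ^ 2 / q01 + s11 ^ 2 / q11 + γ ^ 2 * (s00 ^ 2 / q00 + s10 ^ 2 / q10)) =
      γ * (m00 - m10) - (m01 - m11))
    (h0 : (q00 / s00 ^ 2 + q01 * γ ^ 2 / s01 ^ 2) * v0 ^ 2 = q00 + q01)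
    (h1 : (q10 / s10 ^ 2 + q11 * γ ^ 2 / s11 ^ 2) * v1 ^ 2 = q10 + q11) :
    1 / 2 * (γ * (m00 - m10) - (m01 - m11)) ^ 2 /
        (s01 ^ 2 / q01 + s11 ^ 2 / q11 + γ ^ 2 * (s00 ^ 2 / q00 + s10 ^ 2 / q10)) +
      ((q00 + q01) / 2 * Real.log (q00 / q01 + γ ^ 2 * s00 ^ 2 / s01 ^ 2) -
          (q00 + q01) / 2 * Real.log (q00 / q01 + 1) - q01 * Real.log γ -
          q01 * Real.log (s00 / s01) +
        ((q10 + q11) / 2 * Real.log (q10 / q11 + γ ^ 2 * s10 ^ 2 / s11 ^ 2) -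
          (q10 + q11) / 2 * Real.log (q10 / q11 + 1) - q11 * Real.log γ -
          q11 * Real.log (s10 / s11))) =
    q00 * ((m00 - lam * γ * s00 ^ 2 / q00 - m00) ^ 2 / (2 * s00 ^ 2) +
        (v0 ^ 2 - s00 ^ 2) / (2 * s00 ^ 2) + Real.log (s00 / v0)) +
      q01 * ((m01 + lam * s01 ^ 2 / q01 - m01) ^ 2 / (2 * s01 ^ 2) +
        ((γ * v0) ^ 2 - s01 ^ 2) / (2 * s01 ^ 2) + Real.log (s01 / (γ * v0))) +
      (q10 * ((m10 + lam * γ * s10 ^ 2 / q10 - m10) ^ 2 / (2 * s10 ^ 2) +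
        (v1 ^ 2 - s10 ^ 2) / (2 * s10 ^ 2) + Real.log (s10 / v1)) +
       q11 * ((m11 - lam * s11 ^ 2 / q11 - m11) ^ 2 / (2 * s11 ^ 2) +
        ((γ * v1) ^ 2 - s11 ^ 2) / (2 * s11 ^ 2) + Real.log (s11 / (γ * v1)))) := by
  have hsplit :
      q00 * ((m00 - lam * γ * s00 ^ 2 / q00 - m00) ^ 2 / (2 * s00 ^ 2) +
          (v0 ^ 2 - s00 ^ 2) / (2 * s00 ^ 2) + Real.log (s00 / v0)) +
        q01 * ((m01 + lam * s01 ^ 2 / q01 - m01) ^ 2 / (2 * s01 ^ 2) +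
          ((γ * v0) ^ 2 - s01 ^ 2) / (2 * s01 ^ 2) + Real.log (s01 / (γ * v0))) +
        (q10 * ((m10 + lam * γ * s10 ^ 2 / q10 - m10) ^ 2 / (2 * s10 ^ 2) +
          (v1 ^ 2 - s10 ^ 2) / (2 * s10 ^ 2) + Real.log (s10 / v1)) +
         q11 * ((m11 - lam * s11 ^ 2 / q11 - m11) ^ 2 / (2 * s11 ^ 2) +
          ((γ * v1) ^ 2 - s11 ^ 2) / (2 * s11 ^ 2) + Real.log (s11 / (γ * v1)))) =
      (q00 * ((lam * γ * s00 ^ 2 / q00) ^ 2 / (2 * s00 ^ 2)) +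
        q01 * ((lam * s01 ^ 2 / q01) ^ 2 / (2 * s01 ^ 2)) +
        q10 * ((lam * γ * s10 ^ 2 / q10) ^ 2 / (2 * s10 ^ 2)) +
        q11 * ((lam * s11 ^ 2 / q11) ^ 2 / (2 * s11 ^ 2))) +
      ((q00 * ((v0 ^ 2 - s00 ^ 2) / (2 * s00 ^ 2) + Real.log (s00 / v0)) +
        q01 * (((γ * v0) ^ 2 - s01 ^ 2) / (2 * s01 ^ 2) + Real.log (s01 / (γ * v0)))) +
       (q10 * ((v1 ^ 2 - s10 ^ 2) / (2 * s10 ^ 2) + Real.log (s10 / v1)) +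
        q11 * (((γ * v1) ^ 2 - s11 ^ 2) / (2 * s11 ^ 2) + Real.log (s11 / (γ * v1))))) := by
    ring
  rw [hsplit]
  set N := γ * (m00 - m10) - (m01 - m11) with hN
  set D := s01 ^ 2 / q01 + s11 ^ 2 / q11 + γ ^ 2 * (s00 ^ 2 / q00 + s10 ^ 2 / q10) with hD
  have hDpos : 0 < D := by rw [hD]; positivity
  have hk0 := varkey q00 q01 s00 s01 γ v0 hq00 hq01 hs00 hs01 hγ hv0
  have hk1 := varkey q10 q11 s10 s11 γ v1 hq10 hq11 hs10 hs11 hγ hv1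
  have hx0 : (q00 / s00 ^ 2 + q01 * γ ^ 2 / s01 ^ 2) * v0 ^ 2 / (q00 + q01) = 1 := by
    rw [h0]; exact div_self (by positivity)
  have hx1 : (q10 / s10 ^ 2 + q11 * γ ^ 2 / s11 ^ 2) * v1 ^ 2 / (q10 + q11) = 1 := by
    rw [h1]; exact div_self (by positivity)
  rw [hx0] at hk0
  rw [hx1] at hk1
  have hz0 : (q00 + q01) / 2 * (1 - 1 - Real.log 1) = 0 := by simp
  have hz1 : (q10 + q11) / 2 * (1 - 1 - Real.log 1) = 0 := by simp
  have hmean : q00 * ((lam * γ * s00 ^ 2 / q00) ^ 2 / (2 * s00 ^ 2)) +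
      q01 * ((lam * s01 ^ 2 / q01) ^ 2 / (2 * s01 ^ 2)) +
      q10 * ((lam * γ * s10 ^ 2 / q10) ^ 2 / (2 * s10 ^ 2)) +
      q11 * ((lam * s11 ^ 2 / q11) ^ 2 / (2 * s11 ^ 2)) = lam ^ 2 * D / 2 := by
    rw [hD]; field_simp; ring
  have e1 : 1 / 2 * N ^ 2 / D = lam ^ 2 * D / 2 := by
    rw [← hlam]; field_simp
  linarith [hk0, hk1, hz0, hz1, hmean, e1]

/-- the reduced one-dimensional objective of the all-subgroups
exact-fairness KL-minimization. For fixed `γ > 0`, the minimum of the KL objective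
`Σ_{i,a} q_{ia} [(μ̃_{ia} − μ_{ia})²/(2σ_{ia}²) + (σ̃_{ia}² − σ_{ia}²)/(2σ_{ia}²) + log(σ_{ia}/σ̃_{ia})]`
over `μ̃_{ia} ∈ ℝ` and `σ̃_{ia} > 0`, subject to `μ̃₀₁ − μ̃₁₁ = γ(μ̃₀₀ − μ̃₁₀)` and
`σ̃_{i1} = γ σ̃_{i0}`, equals the stated `L*_γ`. -/
theorem statement11 (q s m : Fin 2 → Fin 2 → ℝ)
    (hq : ∀ i a, 0 < q i a) (hs : ∀ i a, 0 < s i a) (γ : ℝ) (hγ : 0 < γ) :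
    IsLeast
      {z : ℝ | ∃ t u : Fin 2 → Fin 2 → ℝ,
        (∀ i a, 0 < u i a) ∧
        (t 0 1 - t 1 1 = γ * (t 0 0 - t 1 0)) ∧
        (∀ i, u i 1 = γ * u i 0) ∧
        z = ∑ i : Fin 2, ∑ a : Fin 2,
          q i a * ((t i a - m i a) ^ 2 / (2 * s i a ^ 2) +
            (u i a ^ 2 - s i a ^ 2) / (2 * s i a ^ 2) + Real.log (s i a / u i a))}
      ((1 / 2) * (γ * (m 0 0 - m 1 0) - (m 0 1 - m 1 1)) ^ 2 /
          (s 0 1 ^ 2 / q 0 1 + s 1 1 ^ 2 / q 1 1 +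
            γ ^ 2 * (s 0 0 ^ 2 / q 0 0 + s 1 0 ^ 2 / q 1 0)) +
        ∑ i : Fin 2,
          ((q i 0 + q i 1) / 2 * Real.log (q i 0 / q i 1 + γ ^ 2 * s i 0 ^ 2 / s i 1 ^ 2) -
            (q i 0 + q i 1) / 2 * Real.log (q i 0 / q i 1 + 1) -
            q i 1 * Real.log γ - q i 1 * Real.log (s i 0 / s i 1))) := by
  have hq00 := hq 0 0; have hq01 := hq 0 1; have hq10 := hq 1 0; have hq11 := hq 1 1
  have hs00 := hs 0 0; have hs01 := hs 0 1; have hs10 := hs 1 0; have hs11 := hs 1 1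
  have hDpos : 0 < s 0 1 ^ 2 / q 0 1 + s 1 1 ^ 2 / q 1 1 +
      γ ^ 2 * (s 0 0 ^ 2 / q 0 0 + s 1 0 ^ 2 / q 1 0) := by positivity
  constructor
  · refine ⟨![![m 0 0 - (γ * (m 0 0 - m 1 0) - (m 0 1 - m 1 1)) /
        (s 0 1 ^ 2 / q 0 1 + s 1 1 ^ 2 / q 1 1 +
          γ ^ 2 * (s 0 0 ^ 2 / q 0 0 + s 1 0 ^ 2 / q 1 0)) * γ * s 0 0 ^ 2 / q 0 0,
      m 0 1 + (γ * (m 0 0 - m 1 0) - (m 0 1 - m 1 1)) /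
        (s 0 1 ^ 2 / q 0 1 + s 1 1 ^ 2 / q 1 1 +
          γ ^ 2 * (s 0 0 ^ 2 / q 0 0 + s 1 0 ^ 2 / q 1 0)) * s 0 1 ^ 2 / q 0 1],
      ![m 1 0 + (γ * (m 0 0 - m 1 0) - (m 0 1 - m 1 1)) /
        (s 0 1 ^ 2 / q 0 1 + s 1 1 ^ 2 / q 1 1 +
          γ ^ 2 * (s 0 0 ^ 2 / q 0 0 + s 1 0 ^ 2 / q 1 0)) * γ * s 1 0 ^ 2 / q 1 0,
      m 1 1 - (γ * (m 0 0 - m 1 0) - (m 0 1 - m 1 1)) /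
        (s 0 1 ^ 2 / q 0 1 + s 1 1 ^ 2 / q 1 1 +
          γ ^ 2 * (s 0 0 ^ 2 / q 0 0 + s 1 0 ^ 2 / q 1 0)) * s 1 1 ^ 2 / q 1 1]],
      ![![Real.sqrt ((q 0 0 + q 0 1) / (q 0 0 / s 0 0 ^ 2 + q 0 1 * γ ^ 2 / s 0 1 ^ 2)),
          γ * Real.sqrt ((q 0 0 + q 0 1) / (q 0 0 / s 0 0 ^ 2 + q 0 1 * γ ^ 2 / s 0 1 ^ 2))],
        ![Real.sqrt ((q 1 0 + q 1 1) / (q 1 0 / s 1 0 ^ 2 + q 1 1 * γ ^ 2 / s 1 1 ^ 2)),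
          γ * Real.sqrt ((q 1 0 + q 1 1) / (q 1 0 / s 1 0 ^ 2 + q 1 1 * γ ^ 2 / s 1 1 ^ 2))]],
      ?_, ?_, ?_, ?_⟩
    · intro i a
      fin_cases i <;> fin_cases a <;> simp <;> positivity
    · simp only [Matrix.cons_val_zero, Matrix.cons_val_one, Matrix.head_cons]
      have hlam := div_mul_cancel₀ (γ * (m 0 0 - m 1 0) - (m 0 1 - m 1 1)) hDpos.ne'
      linear_combination hlam
    · intro i
      fin_cases i <;> simp
    · simp only [Fin.sum_univ_two, Matrix.cons_val_zero, Matrix.cons_val_one,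
        Matrix.head_cons]
      have hA0 : 0 < q 0 0 / s 0 0 ^ 2 + q 0 1 * γ ^ 2 / s 0 1 ^ 2 := by positivity
      have hA1 : 0 < q 1 0 / s 1 0 ^ 2 + q 1 1 * γ ^ 2 / s 1 1 ^ 2 := by positivity
      have hv0 : 0 < Real.sqrt ((q 0 0 + q 0 1) /
          (q 0 0 / s 0 0 ^ 2 + q 0 1 * γ ^ 2 / s 0 1 ^ 2)) :=
        Real.sqrt_pos.mpr (by positivity)
      have hv1 : 0 < Real.sqrt ((q 1 0 + q 1 1) /
          (q 1 0 / s 1 0 ^ 2 + q 1 1 * γ ^ 2 / s 1 1 ^ 2)) :=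
        Real.sqrt_pos.mpr (by positivity)
      have hsq0 : Real.sqrt ((q 0 0 + q 0 1) /
          (q 0 0 / s 0 0 ^ 2 + q 0 1 * γ ^ 2 / s 0 1 ^ 2)) ^ 2 =
          (q 0 0 + q 0 1) / (q 0 0 / s 0 0 ^ 2 + q 0 1 * γ ^ 2 / s 0 1 ^ 2) :=
        Real.sq_sqrt (by positivity)
      have hsq1 : Real.sqrt ((q 1 0 + q 1 1) /
          (q 1 0 / s 1 0 ^ 2 + q 1 1 * γ ^ 2 / s 1 1 ^ 2)) ^ 2 =
          (q 1 0 + q 1 1) / (q 1 0 / s 1 0 ^ 2 + q 1 1 * γ ^ 2 / s 1 1 ^ 2) :=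
        Real.sq_sqrt (by positivity)
      exact memval (q 0 0) (q 0 1) (q 1 0) (q 1 1) (s 0 0) (s 0 1) (s 1 0) (s 1 1)
        (m 0 0) (m 0 1) (m 1 0) (m 1 1) _ _ _ γ
        hq00 hq01 hq10 hq11 hs00 hs01 hs10 hs11 hγ hv0 hv1
        (div_mul_cancel₀ _ hDpos.ne')
        (by rw [hsq0]; field_simp)
        (by rw [hsq1]; field_simp)
  · rintro z ⟨t, u, hu, ht, huγ, rfl⟩
    simp only [Fin.sum_univ_two]
    rw [huγ 0, huγ 1]
    exact lb (q 0 0) (q 0 1) (q 1 0) (q 1 1) (s 0 0) (s 0 1) (s 1 0) (s 1 1)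
      (m 0 0) (m 0 1) (m 1 0) (m 1 1) (t 0 0) (t 0 1) (t 1 0) (t 1 1)
      (u 0 0) (u 1 0) γ hq00 hq01 hq10 hq11 hs00 hs01 hs10 hs11 hγ
      (hu 0 0) (hu 1 0) ht
end

section
/- Let q_{ia} > 0 for i,a ∈ {0,1}, σ_{00}, σ_{10} > 0, and μ_{ia} ∈ ℝ. Set K = ((q_{10} + q_{00})/(q_{11} + q_{01})) · (q_{11} μ_{11} + q_{01} μ_{01}). Then the minimum over (μ̃_{00}, μ̃_{10}) ∈ ℝ² of q_{00}(μ̃_{00} − μ_{00})²/(2σ_{00}²) + q_{10}(μ̃_{10} − μ_{10})²/(2σ_{10}²), subject to the mean-matching constraint (q_{10} μ̃_{10} + q_{00} μ̃_{00})/(q_{10} + q_{00}) = (q_{11} μ_{11} + q_{01} μ_{01})/(q_{11} + q_{01}) (equivalently q_{00} μ̃_{00} + q_{10} μ̃_{10} = K), is attained at the unique point μ̃_{10} = ( K/(q_{00} σ_{00}²) − μ_{00}/σ_{00}² + μ_{10}/σ_{10}² ) / ( q_{10}/(q_{00} σ_{00}²) + 1/σ_{10}² ) and μ̃_{00} = (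 K/(q_{10} σ_{10}²) − μ_{10}/σ_{10}² + μ_{00}/σ_{00}² ) / ( q_{00}/(q_{10} σ_{10}²) + 1/σ_{00}² ). -/
/-- Affirmative Action by equalizing first moments. With
`K = ((q₁₀ + q₀₀)/(q₁₁ + q₀₁))(q₁₁ μ₁₁ + q₀₁ μ₀₁)`, the minimum of
`q₀₀(μ̃₀₀ − μ₀₀)²/(2σ₀₀²) + q₁₀(μ̃₁₀ − μ₁₀)²/(2σ₁₀²)` over `(μ̃₀₀, μ̃₁₀)` subject to
the mean-matching constraint
`(q₁₀ μ̃₁₀ + q₀₀ μ̃₀₀)/(q₁₀ + q₀₀) = (q₁₁ μ₁₁ + q₀₁ μ₀₁)/(q₁₁ + q₀₁)` is attained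
at the stated unique point. -/
theorem statement15 (q00 q10 q01 q11 s00 s10 m00 m10 m01 m11 : ℝ)
    (hq00 : 0 < q00) (hq10 : 0 < q10) (hq01 : 0 < q01) (hq11 : 0 < q11)
    (hs00 : 0 < s00) (hs10 : 0 < s10) :
    letI K : ℝ := ((q10 + q00) / (q11 + q01)) * (q11 * m11 + q01 * m01)
    letI obj : ℝ → ℝ → ℝ := fun a b =>
      q00 * (a - m00) ^ 2 / (2 * s00 ^ 2) + q10 * (b - m10) ^ 2 / (2 * s10 ^ 2)
    letI bstar : ℝ := (K / (q00 * s00 ^ 2) - m00 / s00 ^ 2 + m10 / s10 ^ 2) /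
      (q10 / (q00 * s00 ^ 2) + 1 / s10 ^ 2)
    letI astar : ℝ := (K / (q10 * s10 ^ 2) - m10 / s10 ^ 2 + m00 / s00 ^ 2) /
      (q00 / (q10 * s10 ^ 2) + 1 / s00 ^ 2)
    ((q10 * bstar + q00 * astar) / (q10 + q00) =
        (q11 * m11 + q01 * m01) / (q11 + q01)) ∧
      (∀ a b : ℝ,
        (q10 * b + q00 * a) / (q10 + q00) = (q11 * m11 + q01 * m01) / (q11 + q01) →
        obj astar bstar ≤ obj a b) ∧
      (∀ a b : ℝ,
        (q10 * b + q00 * a) / (q10 + q00) = (q11 * m11 + q01 * m01) / (q11 + q01) →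
        obj a b = obj astar bstar → a = astar ∧ b = bstar) := by
  beta_reduce
  set K : ℝ := (q10 + q00) / (q11 + q01) * (q11 * m11 + q01 * m01) with hKdef
  set bstar : ℝ := (K / (q00 * s00 ^ 2) - m00 / s00 ^ 2 + m10 / s10 ^ 2) /
      (q10 / (q00 * s00 ^ 2) + 1 / s10 ^ 2) with hbdef
  set astar : ℝ := (K / (q10 * s10 ^ 2) - m10 / s10 ^ 2 + m00 / s00 ^ 2) /
      (q00 / (q10 * s10 ^ 2) + 1 / s00 ^ 2) with hadef
  clear_value K bstar astar
  have hP : (0:ℝ) < s00 ^ 2 := by positivity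
  have hR : (0:ℝ) < s10 ^ 2 := by positivity
  have hD : (0:ℝ) < q00 * s00 ^ 2 + q10 * s10 ^ 2 := by positivity
  have hq : (0:ℝ) < q10 + q00 := by positivity
  have hq' : (0:ℝ) < q11 + q01 := by positivity
  -- closed forms
  have hastar : astar = (K * s00 ^ 2 - m10 * q10 * s00 ^ 2 + m00 * q10 * s10 ^ 2) /
      (q00 * s00 ^ 2 + q10 * s10 ^ 2) := by
    rw [hadef, div_eq_div_iff]
    · field_simp
    · have h1 : (0:ℝ) < q00 / (q10 * s10 ^ 2) := by positivity
      have h2 : (0:ℝ) < 1 / s00 ^ 2 := by positivity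
      linarith
    · exact hD.ne'
  have hbstar : bstar = (K * s10 ^ 2 - m00 * q00 * s10 ^ 2 + m10 * q00 * s00 ^ 2) /
      (q00 * s00 ^ 2 + q10 * s10 ^ 2) := by
    rw [hbdef, div_eq_div_iff]
    · field_simp
      ring
    · have h1 : (0:ℝ) < q10 / (q00 * s00 ^ 2) := by positivity
      have h2 : (0:ℝ) < 1 / s10 ^ 2 := by positivity
      linarith
    · exact hD.ne'
  -- the key linear facts
  have hK : q00 * astar + q10 * bstar = K := by
    rw [hastar, hbstar]
    field_simp
    ring
  have hlam : (astar - m00) * s10 ^ 2 = (bstar - m10) * s00 ^ 2 := by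
    rw [hastar, hbstar]
    field_simp
    ring
  have hlam' : (astar - m00) / s00 ^ 2 = (bstar - m10) / s10 ^ 2 := by
    rw [div_eq_div_iff (by positivity) (by positivity)]
    exact hlam
  -- constraint ⇒ q00*a + q10*b = q00*astar + q10*bstar
  have hcons : ∀ a b : ℝ,
      (q10 * b + q00 * a) / (q10 + q00) = (q11 * m11 + q01 * m01) / (q11 + q01) →
      q00 * a + q10 * b = q00 * astar + q10 * bstar := by
    intro a b h
    rw [div_eq_div_iff (by linarith) (by linarith)] at h
    rw [hK, hKdef]
    field_simp
    linarith [h]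
  -- key identity: obj a b = obj astar bstar + squares, on the constraint line
  have hkey : ∀ a b : ℝ, q00 * a + q10 * b = q00 * astar + q10 * bstar →
      q00 * (a - m00) ^ 2 / (2 * s00 ^ 2) + q10 * (b - m10) ^ 2 / (2 * s10 ^ 2) =
      (q00 * (astar - m00) ^ 2 / (2 * s00 ^ 2) + q10 * (bstar - m10) ^ 2 / (2 * s10 ^ 2))
        + q00 * (a - astar) ^ 2 / (2 * s00 ^ 2) + q10 * (b - bstar) ^ 2 / (2 * s10 ^ 2) := by
    intro a b h
    linear_combination (q00 * (a - astar)) * hlam' + ((bstar - m10) / s10 ^ 2) * h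
  refine ⟨?_, ?_, ?_⟩
  · rw [div_eq_div_iff (by linarith) (by linarith)]
    have hK2 : q10 * bstar + q00 * astar = K := by linarith [hK]
    rw [hK2, hKdef]
    field_simp
  · intro a b h
    have hk := hkey a b (hcons a b h)
    have h1 : 0 ≤ q00 * (a - astar) ^ 2 / (2 * s00 ^ 2) := by positivity
    have h2 : 0 ≤ q10 * (b - bstar) ^ 2 / (2 * s10 ^ 2) := by positivity
    linarith [hk]
  · intro a b h heq
    have hk := hkey a b (hcons a b h)
    have h1 : 0 ≤ q00 * (a - astar) ^ 2 / (2 * s00 ^ 2) := by positivity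
    have h2 : 0 ≤ q10 * (b - bstar) ^ 2 / (2 * s10 ^ 2) := by positivity
    have ha0 : q00 * (a - astar) ^ 2 / (2 * s00 ^ 2) = 0 := by linarith [heq, hk]
    have hb0 : q10 * (b - bstar) ^ 2 / (2 * s10 ^ 2) = 0 := by linarith [heq, hk]
    have ha1 : q00 * (a - astar) ^ 2 = 0 := by
      have h2P : (2 * s00 ^ 2) ≠ 0 := by positivity
      exact (div_eq_zero_iff.mp ha0).resolve_right h2P
    have hb1 : q10 * (b - bstar) ^ 2 = 0 := by
      have h2R : (2 * s10 ^ 2) ≠ 0 := by positivity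
      exact (div_eq_zero_iff.mp hb0).resolve_right h2R
    have ha2 : (a - astar) ^ 2 = 0 := by
      rcases mul_eq_zero.mp ha1 with h' | h'
      · exact absurd h' hq00.ne'
      · exact h'
    have hb2 : (b - bstar) ^ 2 = 0 := by
      rcases mul_eq_zero.mp hb1 with h' | h'
      · exact absurd h' hq10.ne'
      · exact h'
    constructor
    · have := pow_eq_zero_iff (n := 2) (by norm_num) |>.mp ha2
      linarith [this]
    · have := pow_eq_zero_iff (n := 2) (by norm_num) |>.mp hb2
      linarith [this]
end
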